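/- Let B = (b_{jk})_{1 ≤ j,k ≤ n} be a complex n×n matrix such that 1 − 4^{−n} < |b_{jj}| < 3/2 + 4^{−n} for all j, |b_{jk}| < 3/2 + 4^{−n} whenever j < k, and |b_{jk}| < 4^{−n} whenever j > k. Then the matrix B is non-degenerate (has nonzero determinant). -/

import Mathlib

/-!
Conjugating `B` by `diag(4^j)` replaces `b_{jk}` by `4^(j-k) b_{jk}`. Entries above the diagonal
shrink geometrically, so each row's upper part is at most `(3/2 + 4^{-n}) / 3`, while entries
below the diagonal grow by at most `4^(n-1)`, which the bound `4^{-n}` absorbs: the lower part is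
at most `(1 - 4^{1-n}) / 3`. Every off-diagonal row sum is then at most `5/6 - 4^{-n}`, less than
`1 - 4^{-n} < |b_{jj}|`, so the conjugate is strictly diagonally dominant and Gershgorin's theorem
gives `det B ≠ 0`.
-/

open Finset

namespace Matrix

variable {ι : Type*} [Fintype ι] [DecidableEq ι]

theorem det_diagonal_mul_mul_diagonal_inv {K : Type*} [Field K] (A : Matrix ι ι K) {w : ι → K}
    (hw : ∀ i, w i ≠ 0) :
    (diagonal w * A * diagonal w⁻¹).det = A.det := by
  rw [det_mul, det_mul, det_diagonal, det_diagonal, mul_right_comm, ← prod_mul_distrib,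
    prod_eq_one fun i _ => Pi.inv_apply w i ▸ mul_inv_cancel₀ (hw i), one_mul]

theorem det_ne_zero_of_weighted_sum_row_lt_diag {K : Type*} [NormedField K] (A : Matrix ι ι K)
    {w : ι → K} (hw : ∀ i, w i ≠ 0)
    (h : ∀ i, ∑ j ∈ univ.erase i, ‖w i‖ / ‖w j‖ * ‖A i j‖ < ‖A i i‖) :
    A.det ≠ 0 := by
  rw [← det_diagonal_mul_mul_diagonal_inv A hw]
  refine det_ne_zero_of_sum_row_lt_diag fun i => ?_
  have hentry : ∀ j, ‖(diagonal w * A * diagonal w⁻¹) i j‖ = ‖w i‖ / ‖w j‖ * ‖A i j‖ := by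
    simp [mul_diagonal, diagonal_mul, div_eq_mul_inv, mul_right_comm]
  simp_rw [hentry, div_self (norm_ne_zero_iff.2 (hw i)), one_mul]
  exact h i

end Matrix

theorem Finset.sum_erase_eq_sum_Iio_add_sum_Ioi {α M : Type*} [LinearOrder α] [Fintype α]
    [LocallyFiniteOrderBot α] [LocallyFiniteOrderTop α] [AddCommMonoid M] (f : α → M) (i : α) :
    ∑ j ∈ univ.erase i, f j = ∑ j ∈ Iio i, f j + ∑ j ∈ Ioi i, f j := by
  rw [← sum_union (disjoint_left.2 fun j hj hj' => (mem_Iio.1 hj).not_gt (mem_Ioi.1 hj'))]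
  congr 1
  ext j
  simp only [mem_erase, mem_univ, and_true, mem_union, mem_Iio, mem_Ioi]
  exact ne_iff_lt_or_gt

theorem sum_range_pow_div_pow {K : Type*} [Field K] {x : K} (hx0 : x ≠ 0) (hx1 : x ≠ 1) (a : ℕ) :
    ∑ b ∈ range a, x ^ a / x ^ b = (x ^ (a + 1) - x) / (x - 1) := by
  have hx1' : 1 - x ≠ 0 := sub_ne_zero.2 hx1.symm
  simp_rw [div_eq_mul_inv, ← mul_sum, ← inv_pow, geom_sum_eq (inv_ne_one.2 hx1), inv_pow]
  field_simp
  ring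

section OrderedField

variable {K : Type*} [Field K] [LinearOrder K] [IsStrictOrderedRing K] {x : K}

theorem sum_Ioo_pow_div_pow_le (hx : 1 < x) (a n : ℕ) :
    ∑ b ∈ Ioo a n, x ^ a / x ^ b ≤ 1 / (x - 1) := by
  have hx1 : x - 1 ≠ 0 := sub_ne_zero.2 hx.ne'
  calc ∑ b ∈ Ioo a n, x ^ a / x ^ b = x ^ a * ∑ b ∈ Ico (a + 1) n, x⁻¹ ^ b := by
        simp_rw [Ico_add_one_left_eq_Ioo, mul_sum, inv_pow, div_eq_mul_inv]
    _ ≤ x ^ a * (x⁻¹ ^ (a + 1) / (1 - x⁻¹)) := by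
        gcongr
        exact geom_sum_Ico_le_of_lt_one (by positivity) (inv_lt_one_of_one_lt₀ hx)
    _ = 1 / (x - 1) := by
        rw [inv_pow]
        field_simp
        ring

theorem Fin.sum_erase_pow_div_pow_mul_le {n : ℕ} {r : Fin n → K} {ε M : K} (hx : 1 < x)
    (i : Fin n) (hlower : ∀ j < i, r j ≤ ε) (hupper : ∀ j, i < j → r j ≤ M) (hM : 0 ≤ M) :
    ∑ j ∈ univ.erase i, x ^ (i : ℕ) / x ^ (j : ℕ) * r j ≤
      (x ^ ((i : ℕ) + 1) - x) / (x - 1) * ε + 1 / (x - 1) * M := by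
  calc ∑ j ∈ univ.erase i, x ^ (i : ℕ) / x ^ (j : ℕ) * r j
      = ∑ j ∈ Iio i, x ^ (i : ℕ) / x ^ (j : ℕ) * r j +
          ∑ j ∈ Ioi i, x ^ (i : ℕ) / x ^ (j : ℕ) * r j :=
        sum_erase_eq_sum_Iio_add_sum_Ioi _ i
    _ ≤ ∑ j ∈ Iio i, x ^ (i : ℕ) / x ^ (j : ℕ) * ε +
          ∑ j ∈ Ioi i, x ^ (i : ℕ) / x ^ (j : ℕ) * M := by
        gcongr with j hj j hj
        · exact hlower j (mem_Iio.1 hj)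
        · exact hupper j (mem_Ioi.1 hj)
    _ = (∑ b ∈ range i, x ^ (i : ℕ) / x ^ b) * ε +
          (∑ b ∈ Ioo (i : ℕ) n, x ^ (i : ℕ) / x ^ b) * M := by
        rw [← sum_mul, ← sum_mul, ← Nat.Iio_eq_range, ← Fin.map_valEmbedding_Iio,
          ← Fin.map_valEmbedding_Ioi, sum_map, sum_map]
        rfl
    _ ≤ (x ^ ((i : ℕ) + 1) - x) / (x - 1) * ε + 1 / (x - 1) * M := by
        rw [sum_range_pow_div_pow (by positivity) hx.ne']
        gcongr
        exact sum_Ioo_pow_div_pow_le hx _ _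

end OrderedField

theorem matrix_nondegenerate_of_small_lower_entries'_general
    (n : ℕ) (B : Matrix (Fin n) (Fin n) ℂ)
    (hdiag_lb : ∀ j, 1 - ((4 : ℝ) ^ n)⁻¹ < ‖B j j‖)
    (hupper : ∀ j k, j < k → ‖B j k‖ < 3 / 2 + ((4 : ℝ) ^ n)⁻¹)
    (hlower : ∀ j k, k < j → ‖B j k‖ < ((4 : ℝ) ^ n)⁻¹) :
    B.det ≠ 0 := by
  set ε : ℝ := ((4 : ℝ) ^ n)⁻¹ with hε
  refine B.det_ne_zero_of_weighted_sum_row_lt_diag (w := fun j => (4 : ℂ) ^ (j : ℕ))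
    (fun j => by simp) fun i => ?_
  have hrow := Fin.sum_erase_pow_div_pow_mul_le (x := (4 : ℝ)) (by norm_num) i
    (fun j hj => (hlower i j hj).le) (fun j hj => (hupper i j hj).le) (by positivity)
  have hpow : (4 : ℝ) ^ ((i : ℕ) + 1) * ε ≤ 1 := by
    rw [hε, ← div_eq_mul_inv, div_le_one (by positivity)]
    exact pow_le_pow_right₀ (by norm_num) i.isLt
  simp only [norm_pow, RCLike.norm_ofNat]
  calc _ ≤ _ := hrow
    _ ≤ 5 / 6 - ε := by linarith
    _ < ‖B i i‖ := by linarith [hdiag_lb i]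

/-- Let `B = (b_{jk})` be a complex `n×n` matrix such that
`1 − 4^{−n} < |b_{jj}| < 3/2 + 4^{−n}` for all `j`,
`|b_{jk}| < 3/2 + 4^{−n}` whenever `j < k`, and `|b_{jk}| < 4^{−n}` whenever `j > k`.
Then `B` is non-degenerate, i.e. `det B ≠ 0`. -/
theorem matrix_nondegenerate_of_small_lower_entries'
    (n : ℕ) (B : Matrix (Fin n) (Fin n) ℂ)
    (hdiag_lb : ∀ j, 1 - ((4 : ℝ) ^ n)⁻¹ < ‖B j j‖)
    (hdiag_ub : ∀ j, ‖B j j‖ < 3 / 2 + ((4 : ℝ) ^ n)⁻¹)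
    (hupper : ∀ j k, j < k → ‖B j k‖ < 3 / 2 + ((4 : ℝ) ^ n)⁻¹)
    (hlower : ∀ j k, k < j → ‖B j k‖ < ((4 : ℝ) ^ n)⁻¹) :
    B.det ≠ 0 :=
  matrix_nondegenerate_of_small_lower_entries'_general n B hdiag_lb hupper hlower
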